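/- The set of lines in the Plücker-embedded Grassmannian G(2,5) ⊂ ℙ⁹ passing through a point of N₂ := ℙ(span{e₁∧e₂, e₂∧e₃, e₁∧e₃}) sweeps out exactly the hyperplane section {x₄₅ = 0} ∩ G(2,5). -/

import Mathlib

noncomputable section

abbrev V5 : Type := Fin 5 → ℂ

/-- The exterior algebra of `ℂ⁵`; bivectors `Λ²ℂ⁵` live inside it. -/
abbrev ΛV : Type := ExteriorAlgebra ℂ V5

/-- The standard basis `e₁, …, e₅` of `ℂ⁵` (indexed by `0, …, 4`). -/
def e (i : Fin 5) : V5 := Pi.single i 1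

/-- The wedge product `u ∧ v` of two vectors, as an element of the exterior algebra. -/
def wedge (u v : V5) : ΛV := ExteriorAlgebra.ι ℂ u * ExteriorAlgebra.ι ℂ v

/-- The Plücker-embedded Grassmannian `G(2,5) ⊆ ℙ⁹ = ℙ(Λ²ℂ⁵)`:
classes of nonzero decomposable bivectors. -/
def G25 : Set (Projectivization ℂ ΛV) :=
  {P | ∃ u v : V5, ∃ h : wedge u v ≠ 0, P = Projectivization.mk ℂ (wedge u v) h}

/-- The projective linear subspace associated to a linear subspace. -/
def projSet (W : Submodule ℂ ΛV) : Set (Projectivization ℂ ΛV) :=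
  {P | P.rep ∈ W}

/-- The line `ℓ = {[e₁ ∧ (t e₂ + s e₃)] : [t:s] ∈ ℙ¹} ⊆ G(2,5)`. -/
def lineL : Set (Projectivization ℂ ΛV) :=
  {P | ∃ t s : ℂ, ∃ h : wedge (e 0) (t • e 1 + s • e 2) ≠ 0,
    P = Projectivization.mk ℂ (wedge (e 0) (t • e 1 + s • e 2)) h}

/-- The hyperplane `{x₄₅ = 0}` of `Λ²ℂ⁵`: the span of all basis bivectors
`eᵢ ∧ eⱼ` other than `±e₄ ∧ e₅`.  A bivector has vanishing Plücker coordinate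
`x₄₅` iff it lies in this subspace. -/
def W45 : Submodule ℂ ΛV :=
  Submodule.span ℂ
    {z | ∃ i j : Fin 5, ¬(i = 3 ∧ j = 4) ∧ ¬(i = 4 ∧ j = 3) ∧ z = wedge (e i) (e j)}

/-- `N₂ = ℙ(span{e₁∧e₂, e₂∧e₃, e₁∧e₃}) ≅ ℙ²`, the 2-planes contained in
`span(e₁,e₂,e₃)`. -/
def N2 : Submodule ℂ ΛV :=
  Submodule.span ℂ {wedge (e 0) (e 1), wedge (e 1) (e 2), wedge (e 0) (e 2)}

/-! A line of `G(2,5)` through `[x]` and `[y]` makes `x`, `y` and `x + y` decomposable, so the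
polarized Plücker relations vanish on `(x, y)`; for `y ∈ N₂` and the indices `a b 4 5` they
reduce to `y_{ab} x₄₅ = 0`, whence `x₄₅ = 0`. Conversely, if `x₄₅(u ∧ v) = 0` then the plane
`⟨u, v⟩` meets `⟨e₁, e₂, e₃⟩` in some `w`, so `u ∧ v = w ∧ z`; for
`z' ∈ ⟨e₁, e₂, e₃⟩ \ ⟨w, z⟩` the pencil `w ∧ ⟨z, z'⟩` is a line through `[u ∧ v]` meeting `N₂`
at `[w ∧ z']`. -/

open ExteriorAlgebra Submodule Module

lemma wedge_self (u : V5) : wedge u u = 0 := ι_sq_zero u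

lemma wedge_comm (u v : V5) : wedge v u = -wedge u v :=
  eq_neg_of_add_eq_zero_right (ι_add_mul_swap u v)

lemma wedge_zero_left (v : V5) : wedge 0 v = 0 := by simp [wedge]

lemma wedge_add_right (u v v' : V5) : wedge u (v + v') = wedge u v + wedge u v' := by
  simp [wedge, mul_add]

lemma wedge_sub_left (u u' v : V5) : wedge (u - u') v = wedge u v - wedge u' v := by
  simp [wedge, sub_mul]

lemma wedge_neg_right (u v : V5) : wedge u (-v) = -wedge u v := by
  simp [wedge]

lemma wedge_smul_left (c : ℂ) (u v : V5) : wedge (c • u) v = c • wedge u v := by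
  simp [wedge]

lemma wedge_smul_right (c : ℂ) (u v : V5) : wedge u (c • v) = c • wedge u v := by
  simp [wedge]

def wedgeₗ : V5 →ₗ[ℂ] V5 →ₗ[ℂ] ΛV := (LinearMap.mul ℂ ΛV).compl₁₂ (ι ℂ) (ι ℂ)

/-- The Plücker coordinate `x_{ij}`, extended by zero outside degree `2`. -/
def plucker (i j : Fin 5) : ΛV →ₗ[ℂ] ℂ :=
  liftAlternating (Function.update 0 2
    (Matrix.detRowAlternating.compLinearMap (LinearMap.funLeft ℂ ℂ ![i, j])))

lemma plucker_wedge (i j : Fin 5) (u v : V5) :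
    plucker i j (wedge u v) = u i * v j - u j * v i := by
  have : wedge u v = ιMulti ℂ 2 ![u, v] := by simp [wedge, ιMulti_apply]
  rw [this, plucker, liftAlternating_apply_ιMulti, Function.update_self]
  change Matrix.det (Matrix.of fun k l => ![u, v] k (![i, j] l)) = _
  simp [Matrix.det_fin_two]

/-- Unlike membership in `G25`, this includes `0`. -/
def IsDecomposable (x : ΛV) : Prop := ∃ u v : V5, x = wedge u v

lemma IsDecomposable.smul {x : ΛV} (hx : IsDecomposable x) (c : ℂ) :
    IsDecomposable (c • x) := by
  obtain ⟨u, v, rfl⟩ := hx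
  exact ⟨c • u, v, (wedge_smul_left c u v).symm⟩

lemma IsDecomposable.plucker_relation {x : ΛV} (hx : IsDecomposable x) (i j k l : Fin 5) :
    plucker i j x * plucker k l x - plucker i k x * plucker j l x
      + plucker i l x * plucker j k x = 0 := by
  obtain ⟨u, v, rfl⟩ := hx
  simp only [plucker_wedge]
  ring

lemma plucker_polarization {x y : ΛV} (hx : IsDecomposable x) (hy : IsDecomposable y)
    (hxy : IsDecomposable (x + y)) (i j k l : Fin 5) :
    plucker i j x * plucker k l y + plucker i j y * plucker k l x
      - plucker i k x * plucker j l y - plucker i k y * plucker j l x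
      + plucker i l x * plucker j k y + plucker i l y * plucker j k x = 0 := by
  have h := hxy.plucker_relation i j k l
  simp only [map_add] at h
  linear_combination h - hx.plucker_relation i j k l - hy.plucker_relation i j k l

lemma mk_mem_projSet {W : Submodule ℂ ΛV} {x : ΛV} (hx : x ≠ 0) :
    Projectivization.mk ℂ x hx ∈ projSet W ↔ x ∈ W := by
  obtain ⟨a, ha⟩ := Projectivization.exists_smul_eq_mk_rep ℂ x hx
  rw [projSet, Set.mem_ofPred_eq, ← ha, Units.smul_def, smul_mem_iff _ a.ne_zero]

lemma mem_G25_iff {P : Projectivization ℂ ΛV} : P ∈ G25 ↔ IsDecomposable P.rep := by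
  constructor
  · rintro ⟨u, v, huv, rfl⟩
    obtain ⟨a, ha⟩ := Projectivization.exists_smul_eq_mk_rep ℂ _ huv
    rw [← ha, Units.smul_def]
    exact IsDecomposable.smul ⟨u, v, rfl⟩ _
  · rintro ⟨u, v, huv⟩
    refine ⟨u, v, huv ▸ P.rep_nonzero, ?_⟩
    conv_lhs => rw [← P.mk_rep]
    exact (Projectivization.mk_eq_mk_iff' ..).2 ⟨1, by rw [one_smul, huv]⟩

lemma projSet_subset_G25_iff {W : Submodule ℂ ΛV} :
    projSet W ⊆ G25 ↔ ∀ x ∈ W, IsDecomposable x := by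
  refine ⟨fun hW x hx => ?_, fun hW P hP => mem_G25_iff.2 (hW _ hP)⟩
  by_cases hx0 : x = 0
  · exact ⟨0, 0, by rw [hx0, wedge_zero_left]⟩
  have h := mem_G25_iff.1 (hW ((mk_mem_projSet hx0).2 hx))
  obtain ⟨a, ha⟩ := Projectivization.exists_smul_eq_mk_rep ℂ x hx0
  rw [← ha, Units.smul_def] at h
  simpa [smul_smul] using h.smul (a : ℂ)⁻¹

lemma plucker_eq_zero_of_mem_N2 {y : ΛV} (hy : y ∈ N2) (i j : Fin 5) (hj : 3 ≤ j) :
    plucker i j y = 0 := by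
  have hj' : j ≠ 0 ∧ j ≠ 1 ∧ j ≠ 2 := by omega
  have : N2 ≤ LinearMap.ker (plucker i j) := by
    rw [N2, span_le]
    rintro _ (rfl | rfl | rfl) <;> simp [plucker_wedge, e, Pi.single_apply, hj']
  exact this hy

lemma eq_zero_of_mem_N2 {y : ΛV} (hy : y ∈ N2) (h01 : plucker 0 1 y = 0)
    (h12 : plucker 1 2 y = 0) (h02 : plucker 0 2 y = 0) : y = 0 := by
  rw [N2, mem_span_insert] at hy
  obtain ⟨a, y', hy', rfl⟩ := hy
  rw [mem_span_insert] at hy'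
  obtain ⟨b, y'', hy'', rfl⟩ := hy'
  obtain ⟨c, rfl⟩ := mem_span_singleton.1 hy''
  simp_all [plucker_wedge, e]

def E123 : Submodule ℂ V5 := span ℂ {e 0, e 1, e 2}

lemma mem_E123 {x : V5} (h3 : x 3 = 0) (h4 : x 4 = 0) : x ∈ E123 := by
  have hx : x = x 0 • e 0 + x 1 • e 1 + x 2 • e 2 := by
    funext k; fin_cases k <;> simp [e, h3, h4]
  rw [hx]
  exact add_mem (add_mem (smul_mem _ _ (subset_span (by simp)))
    (smul_mem _ _ (subset_span (by simp)))) (smul_mem _ _ (subset_span (by simp)))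

lemma finrank_E123 : finrank ℂ E123 = 3 := by
  have hli : LinearIndependent ℂ ![e 0, e 1, e 2] := by
    convert (Pi.basisFun ℂ (Fin 5)).linearIndependent.comp ![0, 1, 2] (by decide) using 1
    ext i : 1
    fin_cases i <;> simp [e]
  have := finrank_span_eq_card hli
  rwa [Matrix.range_cons, Matrix.range_cons_cons_empty, Set.singleton_union] at this

lemma wedge_mem_N2 {x y : V5} (hx : x ∈ E123) (hy : y ∈ E123) : wedge x y ∈ N2 := by
  have : map₂ wedgeₗ E123 E123 ≤ N2 := by
    rw [E123, map₂_span_span, span_le]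
    rintro _ ⟨a, ha, b, hb, rfl⟩
    change wedge a b ∈ N2
    simp only [Set.mem_insert_iff, Set.mem_singleton_iff] at ha hb
    rcases ha with rfl | rfl | rfl <;> rcases hb with rfl | rfl | rfl <;>
      first
        | (rw [wedge_self]; exact zero_mem _)
        | (apply subset_span; simp; done)
        | (rw [wedge_comm]; apply neg_mem; apply subset_span; simp)
  exact this (apply_mem_map₂ _ hx hy)

lemma wedge_mem_W45 {x : V5} (hx : x ∈ E123) (y : V5) : wedge x y ∈ W45 := by
  have htop : span ℂ (Set.range e) = ⊤ := by
    rw [show e = Pi.basisFun ℂ (Fin 5) from funext fun i => (Pi.basisFun_apply ℂ (Fin 5) i).symm]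
    exact (Pi.basisFun ℂ (Fin 5)).span_eq
  have : map₂ wedgeₗ E123 ⊤ ≤ W45 := by
    rw [E123, ← htop, map₂_span_span, span_le]
    rintro _ ⟨a, ha, _, ⟨j, rfl⟩, rfl⟩
    simp only [Set.mem_insert_iff, Set.mem_singleton_iff] at ha
    rcases ha with rfl | rfl | rfl <;> exact subset_span ⟨_, j, by simp, by simp, rfl⟩
  exact this (apply_mem_map₂ _ hx mem_top)

lemma W45_le_ker_plucker : W45 ≤ LinearMap.ker (plucker 3 4) := by
  rw [W45, span_le]
  rintro z ⟨i, j, h1, h2, rfl⟩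
  rw [SetLike.mem_coe, LinearMap.mem_ker, plucker_wedge]
  fin_cases i <;> fin_cases j <;> simp_all [e]

lemma plucker_eq_zero_of_pencil_meets_N2 {x y : ΛV} (hx : IsDecomposable x)
    (hy : IsDecomposable y) (hxy : IsDecomposable (x + y)) (hyN : y ∈ N2) (hy0 : y ≠ 0) :
    plucker 3 4 x = 0 := by
  have hN := plucker_eq_zero_of_mem_N2 hyN
  -- `y ∈ N2` kills every term of the polarized relation for `a b 3 4` except `y_{ab} x_{34}`
  have key : ∀ a b : Fin 5, plucker a b y * plucker 3 4 x = 0 := fun a b => by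
    have h := plucker_polarization hx hy hxy a b 3 4
    rw [hN 3 4 (by decide), hN a 3 le_rfl, hN b 4 (by decide), hN a 4 (by decide),
      hN b 3 le_rfl] at h
    linear_combination h
  by_contra h
  exact hy0 (eq_zero_of_mem_N2 hyN ((mul_eq_zero.1 (key 0 1)).resolve_right h)
    ((mul_eq_zero.1 (key 1 2)).resolve_right h) ((mul_eq_zero.1 (key 0 2)).resolve_right h))

lemma exists_mem_E123_wedge_eq {u v : V5} (h : plucker 3 4 (wedge u v) = 0) :
    ∃ w ∈ E123, ∃ z, wedge w z = wedge u v := by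
  rw [plucker_wedge] at h
  have hshear : ∀ c : ℂ, wedge (v - c • u) (-u) = wedge u v := fun c => by
    rw [wedge_neg_right, wedge_sub_left, wedge_smul_left, wedge_self, smul_zero, sub_zero,
      wedge_comm, neg_neg]
  by_cases hu3 : u 3 = 0
  · by_cases hu4 : u 4 = 0
    · exact ⟨u, mem_E123 hu3 hu4, v, rfl⟩
    refine ⟨v - (v 4 / u 4) • u, mem_E123 ?_ ?_, -u, hshear _⟩ <;>
      simp only [Pi.sub_apply, Pi.smul_apply, smul_eq_mul] <;> field_simp
    · linear_combination -h
    · ring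
  refine ⟨v - (v 3 / u 3) • u, mem_E123 ?_ ?_, -u, hshear _⟩ <;>
    simp only [Pi.sub_apply, Pi.smul_apply, smul_eq_mul] <;> field_simp
  · ring
  · linear_combination h

lemma mem_W45_of_plucker_eq_zero {x : ΛV} (hx : IsDecomposable x) (h : plucker 3 4 x = 0) :
    x ∈ W45 := by
  obtain ⟨u, v, rfl⟩ := hx
  obtain ⟨w, hw, z, hwz⟩ := exists_mem_E123_wedge_eq h
  exact hwz ▸ wedge_mem_W45 hw z

lemma mem_span_singleton_of_wedge_eq_zero {u x : V5} (hu : u ≠ 0) (h : wedge u x = 0) :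
    x ∈ ℂ ∙ u := by
  obtain ⟨k, hk⟩ : ∃ k, u k ≠ 0 := by
    by_contra! h0
    exact hu (funext h0)
  refine mem_span_singleton.2 ⟨x k / u k, funext fun j => ?_⟩
  have hkj := plucker_wedge k j u x
  rw [h, map_zero] at hkj
  simp only [Pi.smul_apply, smul_eq_mul]
  field_simp
  linear_combination hkj

lemma linearIndependent_wedge_pair {w z z' : V5} (hwz : wedge w z ≠ 0)
    (hz' : z' ∉ span ℂ {w, z}) : LinearIndependent ℂ ![wedge w z, wedge w z'] := by
  have hw : w ≠ 0 := by
    rintro rfl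
    exact hwz (wedge_zero_left z)
  rw [LinearIndependent.pair_iff]
  intro s t hst
  rw [← wedge_smul_right, ← wedge_smul_right, ← wedge_add_right] at hst
  obtain ⟨c, hc⟩ := mem_span_singleton.1 (mem_span_singleton_of_wedge_eq_zero hw hst)
  have ht : t = 0 := by
    by_contra ht
    refine hz' ?_
    have hz'_eq : z' = t⁻¹ • (c • w - s • z) := by
      rw [hc, add_sub_cancel_left, smul_smul, inv_mul_cancel₀ ht, one_smul]
    rw [hz'_eq]
    exact smul_mem _ _ (sub_mem (smul_mem _ _ (subset_span (by simp)))
      (smul_mem _ _ (subset_span (by simp))))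
  subst ht
  rw [zero_smul, add_zero] at hc
  have hs : s • wedge w z = 0 := by
    rw [← wedge_smul_right, ← hc, wedge_smul_right, wedge_self, smul_zero]
  exact ⟨(smul_eq_zero.1 hs).resolve_right hwz, rfl⟩

lemma finrank_span_pair {K V : Type*} [Field K] [AddCommGroup V] [Module K V] {a b : V}
    (h : LinearIndependent K ![a, b]) : finrank K (span K {a, b}) = 2 := by
  have := finrank_span_eq_card h
  rwa [Matrix.range_cons_cons_empty] at this

lemma exists_pencil_of_plucker_eq_zero {x : ΛV} (hx : IsDecomposable x) (hx0 : x ≠ 0)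
    (h : plucker 3 4 x = 0) :
    ∃ W : Submodule ℂ ΛV, finrank ℂ W = 2 ∧ (∀ y ∈ W, IsDecomposable y) ∧ x ∈ W ∧
      ∃ y ∈ W, y ≠ 0 ∧ y ∈ N2 := by
  obtain ⟨u, v, rfl⟩ := hx
  obtain ⟨w, hw, z, hwz⟩ := exists_mem_E123_wedge_eq h
  rw [← hwz] at hx0 ⊢
  obtain ⟨z', hz'E, hz'⟩ : ∃ z' ∈ E123, z' ∉ span ℂ {w, z} := by
    refine SetLike.not_le_iff_exists.1 fun hle => ?_
    have h3 := finrank_E123 ▸ finrank_mono hle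
    have h2 := finrank_range_le_card (R := ℂ) ![w, z]
    rw [Matrix.range_cons_cons_empty, Fintype.card_fin] at h2
    exact absurd (h3.trans h2) (by norm_num)
  have hli := linearIndependent_wedge_pair hx0 hz'
  refine ⟨span ℂ {wedge w z, wedge w z'}, finrank_span_pair hli, fun y hy => ?_,
    subset_span (by simp), wedge w z', subset_span (by simp), hli.ne_zero 1,
    wedge_mem_N2 hw hz'E⟩
  obtain ⟨s, t, rfl⟩ := mem_span_pair.1 hy
  exact ⟨w, s • z + t • z', by rw [wedge_add_right, wedge_smul_right, wedge_smul_right]⟩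

/-- the locus swept out by the lines contained in the
Plücker-embedded `G(2,5) ⊆ ℙ⁹` which pass through a point of `N₂` is exactly the
hyperplane section `{x₄₅ = 0} ∩ G(2,5)`. -/
theorem stmt16 :
    {P : Projectivization ℂ ΛV | P ∈ G25 ∧ ∃ W : Submodule ℂ ΛV,
        Module.finrank ℂ W = 2 ∧ projSet W ⊆ G25 ∧ P ∈ projSet W ∧
        ∃ q ∈ projSet W, q ∈ projSet N2} =
      {P : Projectivization ℂ ΛV | P ∈ G25 ∧ P.rep ∈ W45} := by
  ext P
  simp only [Set.mem_ofPred_eq, mem_G25_iff, projSet_subset_G25_iff]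
  constructor
  · rintro ⟨hP, W, -, hW, hPW, q, hqW, hqN⟩
    exact ⟨hP, mem_W45_of_plucker_eq_zero hP (plucker_eq_zero_of_pencil_meets_N2 (hW _ hPW)
      (hW _ hqW) (hW _ (add_mem hPW hqW)) hqN q.rep_nonzero)⟩
  · rintro ⟨hP, h45⟩
    obtain ⟨W, hW2, hW, hPW, y, hyW, hy0, hyN⟩ :=
      exists_pencil_of_plucker_eq_zero hP P.rep_nonzero (W45_le_ker_plucker h45)
    exact ⟨hP, W, hW2, hW, hPW, Projectivization.mk ℂ y hy0, (mk_mem_projSet hy0).2 hyW,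
      (mk_mem_projSet hy0).2 hyN⟩
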